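/- Let Ω = M × (−h,0) with M = (0,1)², and ṽ ∈ H¹(Ω) with ∫_Ω |ṽ|⁴|∇_H ṽ|² < ∞. Then (∫_M (∫_{−h}^0 |ṽ|⁶ dz)² dxdy)^{1/2} ≤ C ‖ṽ‖_{L⁶(Ω)}³ (∫_Ω |ṽ|⁴ |∇_H ṽ|² dxdydz)^{1/2} + ‖ṽ‖_{L⁶(Ω)}⁶. -/

import Mathlib

/-!
Write `g(x,y) = ∫_{-h}^0 ψ⁶ dz`. On the unit interval `u(x) ≤ ∫₀¹ u + ∫₀¹ |u'|`; applied to `ψ⁶`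
along horizontal lines and integrated in `z`, this bounds `g(x,y)` both by a function `F(y)` and by
a function `G(x)`, so `∫∫ g² ≤ ∫∫ G(x) F(y) = (∫ G)(∫ F)`, with `∫ F = ‖ψ‖₆⁶ + ∫_Ω |∂ₓ ψ⁶|` and
`∫ G = ‖ψ‖₆⁶ + ∫_Ω |∂_y ψ⁶|`. A square root, AM-GM, and the Cauchy-Schwarz bound
`∫_Ω |6 ψ⁵ ∂ψ| ≤ 6 ‖ψ‖₆³ (∫_Ω ψ⁴ |∇_H ψ|²)^{1/2}` give the estimate with `C = 6`.
-/

open MeasureTheory Real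

noncomputable section

/-- Integral over the channel `Ω = (0,1)² × (−h,0)`, written as an iterated integral. -/
def iInt (h : ℝ) (f : ℝ → ℝ → ℝ → ℝ) : ℝ :=
  ∫ x in Set.Ioo (0:ℝ) 1, ∫ y in Set.Ioo (0:ℝ) 1, ∫ z in Set.Ioo (-h) (0:ℝ), f x y z

/-- Smoothness of a function of three real variables. -/
def Smooth3 (f : ℝ → ℝ → ℝ → ℝ) : Prop :=
  ContDiff ℝ (⊤ : ℕ∞) (fun p : ℝ × ℝ × ℝ => f p.1 p.2.1 p.2.2)

/-- Periodicity in the horizontal variables with period 1. -/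
def Per3 (f : ℝ → ℝ → ℝ → ℝ) : Prop :=
  ∀ x y z : ℝ, f (x + 1) y z = f x y z ∧ f x (y + 1) z = f x y z

/-- Horizontal partial derivative in `x`. -/
def dX (f : ℝ → ℝ → ℝ → ℝ) (x y z : ℝ) : ℝ := deriv (fun t => f t y z) x

/-- Horizontal partial derivative in `y`. -/
def dY (f : ℝ → ℝ → ℝ → ℝ) (x y z : ℝ) : ℝ := deriv (fun t => f x t z) y

/-- Vertical partial derivative in `z`. -/
def dZ (f : ℝ → ℝ → ℝ → ℝ) (x y z : ℝ) : ℝ := deriv (fun t => f x y t) z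

/-- `L²(Ω)` norm. -/
def L2n (h : ℝ) (f : ℝ → ℝ → ℝ → ℝ) : ℝ :=
  (iInt h (fun x y z => (f x y z) ^ 2)) ^ ((1:ℝ) / 2)

/-- `L^q(Ω)` norm. -/
def Lqn (h q : ℝ) (f : ℝ → ℝ → ℝ → ℝ) : ℝ :=
  (iInt h (fun x y z => |f x y z| ^ q)) ^ (1 / q)


open Set

theorem Continuous.integrableOn_of_isBounded {X : Type*} [MetricSpace X] [ProperSpace X]
    [MeasurableSpace X] [OpensMeasurableSpace X] {μ : Measure X} [IsFiniteMeasureOnCompacts μ]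
    {f : X → ℝ} (hf : Continuous f) {s : Set X} (hs : Bornology.IsBounded s) :
    IntegrableOn f s μ :=
  (hf.continuousOn.integrableOn_compact hs.isCompact_closure).mono_set subset_closure

theorem continuous_setIntegral_Ioo {X : Type*} [TopologicalSpace X] [FirstCountableTopology X]
    [LocallyCompactSpace X] {f : X → ℝ → ℝ} (hf : Continuous fun p : X × ℝ => f p.1 p.2)
    (a b : ℝ) : Continuous fun x => ∫ y in Ioo a b, f x y := by
  simpa only [integral_Icc_eq_integral_Ioo] using
    continuous_parametric_integral_of_continuous (μ := volume) hf (isCompact_Icc (a := a) (b := b))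

theorem setIntegral_Ioo_comm {f : ℝ → ℝ → ℝ} (hf : Continuous fun p : ℝ × ℝ => f p.1 p.2)
    (a b c d : ℝ) :
    ∫ x in Ioo a b, ∫ y in Ioo c d, f x y = ∫ y in Ioo c d, ∫ x in Ioo a b, f x y := by
  apply integral_integral_swap
  rw [Measure.prod_restrict]
  exact hf.integrableOn_of_isBounded ((Metric.isBounded_Ioo a b).prod (Metric.isBounded_Ioo c d))

theorem sub_le_setIntegral_abs_deriv {w w' : ℝ → ℝ} (hw : ∀ t, HasDerivAt w (w' t) t)
    (hw' : Continuous w') {a b x s : ℝ} (hx : x ∈ Icc a b) (hs : s ∈ Icc a b) :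
    w x - w s ≤ ∫ t in Ioo a b, |w' t| := by
  calc w x - w s = ∫ t in s..x, w' t :=
        (intervalIntegral.integral_eq_sub_of_hasDerivAt (fun t _ => hw t)
          (hw'.intervalIntegrable s x)).symm
    _ ≤ ∫ t in uIoc s x, |w' t| :=
        (le_abs_self _).trans (by simpa only [Real.norm_eq_abs] using
          intervalIntegral.norm_integral_le_integral_norm_uIoc (f := w') (μ := volume))
    _ ≤ ∫ t in Ioc a b, |w' t| :=
        setIntegral_mono_set (hw'.abs.integrableOn_Icc.mono_set Ioc_subset_Icc_self)
          (ae_of_all _ fun t => abs_nonneg _)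
          (Ioc_subset_Ioc (le_min hs.1 hx.1) (max_le hs.2 hx.2)).eventuallyLE
    _ = ∫ t in Ioo a b, |w' t| := integral_Ioc_eq_integral_Ioo

theorem le_setIntegral_Ioo_add_of_forall_le {u : ℝ → ℝ} (hu : IntegrableOn u (Ioo 0 1))
    {c D : ℝ} (h : ∀ s ∈ Ioo (0:ℝ) 1, c ≤ u s + D) : c ≤ (∫ s in Ioo (0:ℝ) 1, u s) + D := by
  have hconst (a : ℝ) : IntegrableOn (fun _ => a) (Ioo (0:ℝ) 1) :=
    integrableOn_const (by simp) (by simp)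
  simpa [integral_add hu (hconst D)] using
    setIntegral_mono_on (hconst c) (hu.add (hconst D)) measurableSet_Ioo h

theorem integral_mul_le_sqrt_mul_sqrt {α : Type*} [MeasurableSpace α] {μ : Measure α}
    {f g : α → ℝ} (hf0 : 0 ≤ᵐ[μ] f) (hg0 : 0 ≤ᵐ[μ] g) (hf : MemLp f 2 μ) (hg : MemLp g 2 μ) :
    ∫ a, f a * g a ∂μ ≤ √(∫ a, f a ^ 2 ∂μ) * √(∫ a, g a ^ 2 ∂μ) := by
  simpa [Real.sqrt_eq_rpow, Real.rpow_two] using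
    integral_mul_le_Lp_mul_Lq_of_nonneg Real.HolderConjugate.two_two hf0 hg0
      (by simpa using hf) (by simpa using hg)

def channel (h : ℝ) : Set (ℝ × ℝ × ℝ) := Ioo 0 1 ×ˢ Ioo 0 1 ×ˢ Ioo (-h) 0

theorem integrableOn_channel {f : ℝ × ℝ × ℝ → ℝ} (hf : Continuous f) (h : ℝ) :
    IntegrableOn f (channel h) :=
  hf.integrableOn_of_isBounded
    ((Metric.isBounded_Ioo 0 1).prod ((Metric.isBounded_Ioo 0 1).prod (Metric.isBounded_Ioo _ _)))

theorem iInt_eq_setIntegral_channel {f : ℝ → ℝ → ℝ → ℝ}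
    (hf : Continuous fun p : ℝ × ℝ × ℝ => f p.1 p.2.1 p.2.2) (h : ℝ) :
    iInt h f = ∫ p in channel h, f p.1 p.2.1 p.2.2 := by
  rw [channel, Measure.volume_eq_prod, setIntegral_prod _ (integrableOn_channel hf h)]
  refine setIntegral_congr_fun measurableSet_Ioo fun x _ => ?_
  rw [Measure.volume_eq_prod, setIntegral_prod]
  exact Continuous.integrableOn_of_isBounded (by fun_prop)
    ((Metric.isBounded_Ioo 0 1).prod (Metric.isBounded_Ioo _ _))

theorem iInt_nonneg {f : ℝ → ℝ → ℝ → ℝ} (hf : ∀ x y z, 0 ≤ f x y z) (h : ℝ) : 0 ≤ iInt h f :=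
  integral_nonneg fun x => integral_nonneg fun y => integral_nonneg fun z => hf x y z

theorem iInt_mono {f g : ℝ → ℝ → ℝ → ℝ}
    (hf : Continuous fun p : ℝ × ℝ × ℝ => f p.1 p.2.1 p.2.2)
    (hg : Continuous fun p : ℝ × ℝ × ℝ => g p.1 p.2.1 p.2.2)
    (hfg : ∀ x y z, f x y z ≤ g x y z) (h : ℝ) : iInt h f ≤ iInt h g := by
  rw [iInt_eq_setIntegral_channel hf, iInt_eq_setIntegral_channel hg]
  exact setIntegral_mono (integrableOn_channel hf h) (integrableOn_channel hg h)
    fun p => hfg _ _ _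

theorem iInt_const_mul (c : ℝ) (f : ℝ → ℝ → ℝ → ℝ) (h : ℝ) :
    iInt h (fun x y z => c * f x y z) = c * iInt h f := by
  simp only [iInt, integral_const_mul]

theorem iInt_abs_mul_le {f g : ℝ → ℝ → ℝ → ℝ}
    (hf : Continuous fun p : ℝ × ℝ × ℝ => f p.1 p.2.1 p.2.2)
    (hg : Continuous fun p : ℝ × ℝ × ℝ => g p.1 p.2.1 p.2.2) (h : ℝ) :
    iInt h (fun x y z => |f x y z * g x y z|) ≤
      √(iInt h fun x y z => f x y z ^ 2) * √(iInt h fun x y z => g x y z ^ 2) := by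
  have hL2 (F : ℝ × ℝ × ℝ → ℝ) (hF : Continuous F) :
      MemLp (fun p => |F p|) 2 (volume.restrict (channel h)) := by
    refine (memLp_two_iff_integrable_sq hF.abs.aestronglyMeasurable).2 ?_
    simp only [sq_abs]
    exact integrableOn_channel (f := fun p => F p ^ 2) (by fun_prop) h
  rw [iInt_eq_setIntegral_channel (hf.mul hg).abs, iInt_eq_setIntegral_channel (hf.pow 2),
    iInt_eq_setIntegral_channel (hg.pow 2)]
  simpa only [abs_mul, sq_abs] using
    integral_mul_le_sqrt_mul_sqrt (ae_of_all _ fun _ => abs_nonneg _)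
      (ae_of_all _ fun _ => abs_nonneg _) (hL2 _ hf) (hL2 _ hg)

theorem iInt_abs_six_mul_pow_five_mul_le {ψ d e : ℝ → ℝ → ℝ → ℝ}
    (hψ : Continuous fun p : ℝ × ℝ × ℝ => ψ p.1 p.2.1 p.2.2)
    (hd : Continuous fun p : ℝ × ℝ × ℝ => d p.1 p.2.1 p.2.2)
    (he : Continuous fun p : ℝ × ℝ × ℝ => e p.1 p.2.1 p.2.2) (h : ℝ) :
    iInt h (fun x y z => |6 * ψ x y z ^ 5 * d x y z|) ≤
      6 * √(iInt h fun x y z => ψ x y z ^ 6) *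
        √(iInt h fun x y z => ψ x y z ^ 4 * (d x y z ^ 2 + e x y z ^ 2)) := by
  have hCS := iInt_abs_mul_le (f := fun x y z => 6 * ψ x y z ^ 3)
    (g := fun x y z => ψ x y z ^ 2 * d x y z) (by fun_prop) (by fun_prop) h
  have hf : (fun x y z => (6 * ψ x y z ^ 3) ^ 2) = fun x y z => 6 ^ 2 * ψ x y z ^ 6 := by
    funext x y z; ring
  have hfg : (fun x y z => |6 * ψ x y z ^ 5 * d x y z|) =
      fun x y z => |6 * ψ x y z ^ 3 * (ψ x y z ^ 2 * d x y z)| := by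
    funext x y z; ring_nf
  rw [hf, iInt_const_mul, Real.sqrt_mul (by norm_num), Real.sqrt_sq (by norm_num), ← hfg] at hCS
  refine hCS.trans ?_
  gcongr
  refine iInt_mono (by fun_prop) (by fun_prop) (fun x y z => ?_) h
  nlinarith [sq_nonneg (ψ x y z ^ 2 * e x y z)]

theorem setIntegral_Ioo_le_mean_add_variation {w wx : ℝ → ℝ → ℝ → ℝ}
    (hw : Continuous fun p : ℝ × ℝ × ℝ => w p.1 p.2.1 p.2.2)
    (hwx : Continuous fun p : ℝ × ℝ × ℝ => wx p.1 p.2.1 p.2.2)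
    (hdx : ∀ x y z, HasDerivAt (fun t => w t y z) (wx x y z) x) (c d : ℝ)
    {x : ℝ} (hx : x ∈ Ioo (0:ℝ) 1) (y : ℝ) :
    ∫ z in Ioo c d, w x y z ≤
      (∫ s in Ioo (0:ℝ) 1, ∫ z in Ioo c d, w s y z) +
        ∫ t in Ioo (0:ℝ) 1, ∫ z in Ioo c d, |wx t y z| := by
  have hint {f : ℝ → ℝ} (hf : Continuous f) (a b : ℝ) : IntegrableOn f (Ioo a b) :=
    hf.integrableOn_of_isBounded (Metric.isBounded_Ioo a b)
  have hmean : Continuous fun s => ∫ z in Ioo c d, w s y z :=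
    continuous_setIntegral_Ioo (f := fun s z => w s y z) (by fun_prop) c d
  have hvar : Continuous fun z => ∫ t in Ioo (0:ℝ) 1, |wx t y z| :=
    continuous_setIntegral_Ioo (f := fun z t => |wx t y z|) (by fun_prop) 0 1
  refine le_setIntegral_Ioo_add_of_forall_le (hint hmean 0 1) fun s hs => ?_
  have hosc (z : ℝ) : w x y z - w s y z ≤ ∫ t in Ioo (0:ℝ) 1, |wx t y z| :=
    sub_le_setIntegral_abs_deriv (fun t => hdx t y z) (by fun_prop)
      (Ioo_subset_Icc_self hx) (Ioo_subset_Icc_self hs)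
  calc ∫ z in Ioo c d, w x y z
      = (∫ z in Ioo c d, w s y z) + ∫ z in Ioo c d, (w x y z - w s y z) := by
        rw [integral_sub (hint (by fun_prop) c d) (hint (by fun_prop) c d)]
        ring
    _ ≤ (∫ z in Ioo c d, w s y z) + ∫ z in Ioo c d, ∫ t in Ioo (0:ℝ) 1, |wx t y z| :=
        add_le_add_right (integral_mono (hint (by fun_prop) c d) (hint hvar c d) hosc) _
    _ = (∫ z in Ioo c d, w s y z) + ∫ t in Ioo (0:ℝ) 1, ∫ z in Ioo c d, |wx t y z| := by
        rw [setIntegral_Ioo_comm (f := fun z t => |wx t y z|) (by fun_prop)]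

theorem integral_sq_le_mul_of_le {g : ℝ → ℝ → ℝ} {F G : ℝ → ℝ} {a b c d : ℝ}
    (hg : Continuous fun p : ℝ × ℝ => g p.1 p.2)
    (hF : IntegrableOn F (Ioo c d)) (hG : IntegrableOn G (Ioo a b))
    (hg0 : ∀ x ∈ Ioo a b, ∀ y ∈ Ioo c d, 0 ≤ g x y)
    (hgF : ∀ x ∈ Ioo a b, ∀ y ∈ Ioo c d, g x y ≤ F y)
    (hgG : ∀ x ∈ Ioo a b, ∀ y ∈ Ioo c d, g x y ≤ G x) :
    ∫ x in Ioo a b, ∫ y in Ioo c d, g x y ^ 2 ≤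
      (∫ x in Ioo a b, G x) * ∫ y in Ioo c d, F y := by
  calc ∫ x in Ioo a b, ∫ y in Ioo c d, g x y ^ 2
      ≤ ∫ x in Ioo a b, G x * ∫ y in Ioo c d, F y := by
        refine setIntegral_mono_on
          ((continuous_setIntegral_Ioo (f := fun x y => g x y ^ 2) (by fun_prop) c d
            ).integrableOn_of_isBounded (Metric.isBounded_Ioo a b))
          (hG.mul_const _) measurableSet_Ioo fun x hx => ?_
        rw [← integral_const_mul]
        refine setIntegral_mono_on
          (Continuous.integrableOn_of_isBounded (by fun_prop) (Metric.isBounded_Ioo c d))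
          (hF.const_mul _) measurableSet_Ioo fun y hy => ?_
        rw [sq]
        exact mul_le_mul (hgG x hx y hy) (hgF x hx y hy) (hg0 x hx y hy)
          ((hg0 x hx y hy).trans (hgG x hx y hy))
    _ = (∫ x in Ioo a b, G x) * ∫ y in Ioo c d, F y := integral_mul_const _ _

theorem integral_sq_setIntegral_le_iInt_mul {w wx wy : ℝ → ℝ → ℝ → ℝ}
    (hw : Continuous fun p : ℝ × ℝ × ℝ => w p.1 p.2.1 p.2.2)
    (hwx : Continuous fun p : ℝ × ℝ × ℝ => wx p.1 p.2.1 p.2.2)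
    (hwy : Continuous fun p : ℝ × ℝ × ℝ => wy p.1 p.2.1 p.2.2)
    (hdx : ∀ x y z, HasDerivAt (fun t => w t y z) (wx x y z) x)
    (hdy : ∀ x y z, HasDerivAt (fun t => w x t z) (wy x y z) y)
    (hw0 : ∀ x y z, 0 ≤ w x y z) (h : ℝ) :
    ∫ x in Ioo (0:ℝ) 1, ∫ y in Ioo (0:ℝ) 1, (∫ z in Ioo (-h) 0, w x y z) ^ 2 ≤
      (iInt h w + iInt h fun x y z => |wy x y z|) *
        (iInt h w + iInt h fun x y z => |wx x y z|) := by
  have hvert (k : ℝ → ℝ → ℝ → ℝ) (hk : Continuous fun p : ℝ × ℝ × ℝ => k p.1 p.2.1 p.2.2) :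
      Continuous fun q : ℝ × ℝ => ∫ z in Ioo (-h) 0, k q.1 q.2 z :=
    continuous_setIntegral_Ioo (f := fun (q : ℝ × ℝ) z => k q.1 q.2 z) (by fun_prop) _ _
  have hmean_x (k : ℝ → ℝ → ℝ → ℝ) (hk : Continuous fun p : ℝ × ℝ × ℝ => k p.1 p.2.1 p.2.2) :
      IntegrableOn (fun y => ∫ x in Ioo (0:ℝ) 1, ∫ z in Ioo (-h) 0, k x y z) (Ioo 0 1) :=
    (continuous_setIntegral_Ioo (f := fun y x => ∫ z in Ioo (-h) 0, k x y z)
      ((hvert k hk).comp continuous_swap) 0 1).integrableOn_of_isBounded (Metric.isBounded_Ioo 0 1)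
  have hmean_y (k : ℝ → ℝ → ℝ → ℝ) (hk : Continuous fun p : ℝ × ℝ × ℝ => k p.1 p.2.1 p.2.2) :
      IntegrableOn (fun x => ∫ y in Ioo (0:ℝ) 1, ∫ z in Ioo (-h) 0, k x y z) (Ioo 0 1) :=
    (continuous_setIntegral_Ioo (f := fun x y => ∫ z in Ioo (-h) 0, k x y z) (hvert k hk)
      0 1).integrableOn_of_isBounded (Metric.isBounded_Ioo 0 1)
  have hswap (k : ℝ → ℝ → ℝ → ℝ) (hk : Continuous fun p : ℝ × ℝ × ℝ => k p.1 p.2.1 p.2.2) :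
      ∫ y in Ioo (0:ℝ) 1, ∫ x in Ioo (0:ℝ) 1, ∫ z in Ioo (-h) 0, k x y z = iInt h k :=
    (setIntegral_Ioo_comm (f := fun x y => ∫ z in Ioo (-h) 0, k x y z) (hvert k hk) 0 1 0 1).symm
  have key := integral_sq_le_mul_of_le (hvert w hw)
    (F := fun y => (∫ x in Ioo (0:ℝ) 1, ∫ z in Ioo (-h) 0, w x y z) +
      ∫ x in Ioo (0:ℝ) 1, ∫ z in Ioo (-h) 0, |wx x y z|)
    (G := fun x => (∫ y in Ioo (0:ℝ) 1, ∫ z in Ioo (-h) 0, w x y z) +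
      ∫ y in Ioo (0:ℝ) 1, ∫ z in Ioo (-h) 0, |wy x y z|)
    ((hmean_x w hw).add (hmean_x _ (by fun_prop)))
    ((hmean_y w hw).add (hmean_y _ (by fun_prop)))
    (fun x _ y _ => integral_nonneg fun z => hw0 x y z)
    (fun x hx y _ => setIntegral_Ioo_le_mean_add_variation hw hwx hdx (-h) 0 hx y)
    (fun x _ y hy => setIntegral_Ioo_le_mean_add_variation (w := fun a b c => w b a c)
      (wx := fun a b c => wy b a c) (by fun_prop) (by fun_prop) (fun a b c => hdy b a c)
      (-h) 0 hy x)
  rwa [integral_add (hmean_x w hw) (hmean_x _ (by fun_prop)), hswap w hw, hswap _ (by fun_prop),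
    integral_add (hmean_y w hw) (hmean_y _ (by fun_prop))] at key

namespace Smooth3

variable {ψ : ℝ → ℝ → ℝ → ℝ}

theorem continuous (hψ : Smooth3 ψ) : Continuous fun p : ℝ × ℝ × ℝ => ψ p.1 p.2.1 p.2.2 :=
  ContDiff.continuous hψ

theorem swap (hψ : Smooth3 ψ) : Smooth3 fun a b c => ψ b a c :=
  ContDiff.comp hψ (by fun_prop : ContDiff ℝ _ fun p : ℝ × ℝ × ℝ => (p.2.1, p.1, p.2.2))

theorem hasDerivAt_fderiv (hψ : Smooth3 ψ) (x y z : ℝ) :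
    HasDerivAt (fun t => ψ t y z)
      (fderiv ℝ (fun p : ℝ × ℝ × ℝ => ψ p.1 p.2.1 p.2.2) (x, y, z) (1, 0, 0)) x :=
  have hline : HasDerivAt (fun t : ℝ => (t, y, z)) ((1 : ℝ), (0 : ℝ), (0 : ℝ)) x :=
    (hasDerivAt_id x).prodMk (hasDerivAt_const x (y, z))
  have hdiff : DifferentiableAt ℝ (fun p : ℝ × ℝ × ℝ => ψ p.1 p.2.1 p.2.2) (x, y, z) :=
    ContDiff.differentiable hψ (by simp) _
  hdiff.hasFDerivAt.comp_hasDerivAt (f := fun t : ℝ => (t, y, z)) x hline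

theorem hasDerivAt_dX (hψ : Smooth3 ψ) (x y z : ℝ) :
    HasDerivAt (fun t => ψ t y z) (dX ψ x y z) x := by
  rw [dX, (hψ.hasDerivAt_fderiv x y z).deriv]
  exact hψ.hasDerivAt_fderiv x y z

theorem continuous_dX (hψ : Smooth3 ψ) :
    Continuous fun p : ℝ × ℝ × ℝ => dX ψ p.1 p.2.1 p.2.2 := by
  simp only [dX, fun p : ℝ × ℝ × ℝ => (hψ.hasDerivAt_fderiv p.1 p.2.1 p.2.2).deriv]
  exact (ContDiff.continuous_fderiv hψ (by simp)).clm_apply continuous_const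

-- `dY ψ x y z` is definitionally `dX (fun a b c => ψ b a c) y x z`.
theorem hasDerivAt_dY (hψ : Smooth3 ψ) (x y z : ℝ) :
    HasDerivAt (fun t => ψ x t z) (dY ψ x y z) y :=
  hψ.swap.hasDerivAt_dX y x z

theorem continuous_dY (hψ : Smooth3 ψ) :
    Continuous fun p : ℝ × ℝ × ℝ => dY ψ p.1 p.2.1 p.2.2 :=
  hψ.swap.continuous_dX.comp (by fun_prop : Continuous fun p : ℝ × ℝ × ℝ => (p.2.1, p.1, p.2.2))

theorem integral_sq_setIntegral_pow_six_le (hψ : Smooth3 ψ) (h : ℝ) :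
    ∫ x in Ioo (0:ℝ) 1, ∫ y in Ioo (0:ℝ) 1, (∫ z in Ioo (-h) 0, ψ x y z ^ 6) ^ 2 ≤
      ((iInt h fun x y z => ψ x y z ^ 6) + iInt h fun x y z => |6 * ψ x y z ^ 5 * dY ψ x y z|) *
        ((iInt h fun x y z => ψ x y z ^ 6) + iInt h fun x y z => |6 * ψ x y z ^ 5 * dX ψ x y z|) :=
  have := hψ.continuous
  have := hψ.continuous_dX
  have := hψ.continuous_dY
  integral_sq_setIntegral_le_iInt_mul (w := fun x y z => ψ x y z ^ 6)
    (wx := fun x y z => 6 * ψ x y z ^ 5 * dX ψ x y z)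
    (wy := fun x y z => 6 * ψ x y z ^ 5 * dY ψ x y z) (by fun_prop) (by fun_prop) (by fun_prop)
    (fun x y z => by simpa using (hψ.hasDerivAt_dX x y z).fun_pow 6)
    (fun x y z => by simpa using (hψ.hasDerivAt_dY x y z).fun_pow 6)
    (fun _ _ _ => by positivity) h

end Smooth3

theorem Lqn_six_eq (h : ℝ) (ψ : ℝ → ℝ → ℝ → ℝ) :
    Lqn h 6 ψ = (iInt h fun x y z => ψ x y z ^ 6) ^ (6⁻¹ : ℝ) := by
  have hψ6 (x y z : ℝ) : |ψ x y z| ^ (6 : ℝ) = ψ x y z ^ 6 := by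
    rw [show (6 : ℝ) = (6 : ℕ) by norm_num, Real.rpow_natCast, Even.pow_abs ⟨3, rfl⟩]
  simp only [Lqn, one_div, hψ6]

theorem Lqn_six_pow_three (h : ℝ) (ψ : ℝ → ℝ → ℝ → ℝ) :
    Lqn h 6 ψ ^ 3 = √(iInt h fun x y z => ψ x y z ^ 6) := by
  rw [Lqn_six_eq, ← Real.rpow_natCast, ← Real.rpow_mul (iInt_nonneg (fun _ _ _ => by positivity) h),
    Real.sqrt_eq_rpow]
  norm_num

theorem Lqn_six_pow_six (h : ℝ) (ψ : ℝ → ℝ → ℝ → ℝ) :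
    Lqn h 6 ψ ^ 6 = iInt h fun x y z => ψ x y z ^ 6 := by
  rw [Lqn_six_eq, ← Real.rpow_natCast, ← Real.rpow_mul (iInt_nonneg (fun _ _ _ => by positivity) h)]
  norm_num

theorem anisotropic_L6_power2_general (h : ℝ) :
    ∃ C > (0:ℝ), ∀ ψ : ℝ → ℝ → ℝ → ℝ, Smooth3 ψ → Per3 ψ →
      (∫ x in Set.Ioo (0:ℝ) 1, ∫ y in Set.Ioo (0:ℝ) 1,
          (∫ z in Set.Ioo (-h) (0:ℝ), |ψ x y z| ^ 6) ^ 2) ^ ((1:ℝ) / 2) ≤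
        C * (Lqn h 6 ψ) ^ 3
            * (iInt h (fun x y z =>
                (ψ x y z) ^ 4 * ((dX ψ x y z) ^ 2 + (dY ψ x y z) ^ 2))) ^ ((1:ℝ) / 2)
          + (Lqn h 6 ψ) ^ 6 := by
  refine ⟨6, by norm_num, fun ψ hψ _ => ?_⟩
  simp only [Even.pow_abs ⟨3, rfl⟩, Lqn_six_pow_three, Lqn_six_pow_six, ← Real.sqrt_eq_rpow]
  set P := iInt h fun x y z => ψ x y z ^ 6
  set B := iInt h fun x y z => ψ x y z ^ 4 * (dX ψ x y z ^ 2 + dY ψ x y z ^ 2)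
  set Qx := iInt h fun x y z => |6 * ψ x y z ^ 5 * dX ψ x y z|
  set Qy := iInt h fun x y z => |6 * ψ x y z ^ 5 * dY ψ x y z|
  have hQx : Qx ≤ 6 * √P * √B :=
    iInt_abs_six_mul_pow_five_mul_le hψ.continuous hψ.continuous_dX hψ.continuous_dY h
  have hQy : Qy ≤ 6 * √P * √B := by
    simpa only [add_comm] using
      iInt_abs_six_mul_pow_five_mul_le hψ.continuous hψ.continuous_dY hψ.continuous_dX h
  have hP : 0 ≤ P := iInt_nonneg (fun _ _ _ => by positivity) h
  have hQx0 : 0 ≤ Qx := iInt_nonneg (fun _ _ _ => abs_nonneg _) h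
  have hQy0 : 0 ≤ Qy := iInt_nonneg (fun _ _ _ => abs_nonneg _) h
  calc √(∫ x in Ioo (0:ℝ) 1, ∫ y in Ioo (0:ℝ) 1, (∫ z in Ioo (-h) 0, ψ x y z ^ 6) ^ 2)
      ≤ √((P + Qy) * (P + Qx)) := Real.sqrt_le_sqrt (hψ.integral_sq_setIntegral_pow_six_le h)
    _ ≤ P + (Qx + Qy) / 2 :=
        Real.sqrt_le_iff.2 ⟨by positivity, by nlinarith [sq_nonneg (Qx - Qy)]⟩
    _ ≤ 6 * √P * √B + P := by linarith

/-- On `Ω = (0,1)² × (−h,0)`: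
`(∫_M (∫_{−h}^0 |ṽ|⁶ dz)²)^{1/2} ≤ C ‖ṽ‖_{L⁶}³ (∫_Ω |ṽ|⁴|∇_H ṽ|²)^{1/2} + ‖ṽ‖_{L⁶}⁶`. -/
theorem anisotropic_L6_power2 (h : ℝ) (hh : 0 < h) :
    ∃ C > (0:ℝ), ∀ ψ : ℝ → ℝ → ℝ → ℝ, Smooth3 ψ → Per3 ψ →
      (∫ x in Set.Ioo (0:ℝ) 1, ∫ y in Set.Ioo (0:ℝ) 1,
          (∫ z in Set.Ioo (-h) (0:ℝ), |ψ x y z| ^ 6) ^ 2) ^ ((1:ℝ) / 2) ≤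
        C * (Lqn h 6 ψ) ^ 3
            * (iInt h (fun x y z =>
                (ψ x y z) ^ 4 * ((dX ψ x y z) ^ 2 + (dY ψ x y z) ^ 2))) ^ ((1:ℝ) / 2)
          + (Lqn h 6 ψ) ^ 6 :=
  anisotropic_L6_power2_general h
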